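/- Let p(X) = X³ − X² + 2X and q(X) = 2X⁶ + X⁵ + X − 1 over 𝔽₅, and let 𝔽₂₅ be the field with 25 elements. For every a ∈ 𝔽₂₅ with a ∉ 𝔽₅ and −16(4p(a)³ + 27q(a)²) ≠ 0, the group of 𝔽₂₅-rational points of the elliptic curve y² = x³ + p(a)x + q(a) over 𝔽₂₅ is not cyclic. (These curves are exactly the reductions of E : y² = x³ + p(t)x + q(t) over 𝔽₅(t) at the degree-2 places of good reduction.) -/

import Mathlib

/-!
In characteristic 5 one has `q = 2p² + 3p + 4`, so the curve only depends on `A = p(a)`. Its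
3-division polynomial is `3 (x + 1) (x³ - x² + (2A + 1) x - 2A²)`, and `x = -1` gives the
3-torsion point `(-1, √2 (A + 3))`, which is defined over `𝔽₂₅`. For `a` of degree 2 over `𝔽₅`,
`A` is a root of `(A - 2)(A³ - A)(A² - A + 1)(A² - A + 2)`; `A = 2` is the singular fibre, and for
each other factor the cubic has an explicit root in `𝔽₂₅` above which the curve has a point. Two
3-torsion points with different `x`-coordinates generate `(ℤ/3)²`, which a cyclic group cannot
contain.
-/

instance : Fact (Nat.Prime 5) := ⟨by norm_num⟩

open WeierstrassCurve WeierstrassCurve.Affine Polynomial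

section Cyclic

variable {G : Type*} [AddCommGroup G]

lemma not_isAddCyclic_of_nsmul_eq_zero {p : ℕ} [hp : Fact p.Prime] {P Q : G}
    (hP : p • P = 0) (hP0 : P ≠ 0) (hQ : p • Q = 0) (hQP : Q ∉ AddSubgroup.zmultiples P) :
    ¬IsAddCyclic G := by
  intro hG
  let K := (nsmulAddMonoidHom p : G →+ G).ker
  have hexp : AddMonoid.exponent K ∣ p :=
    AddMonoid.exponent_dvd_of_forall_nsmul_eq_zero fun x ↦ Subtype.ext x.2
  have hcard : Nat.card K = p := by
    rw [← IsAddCyclic.exponent_eq_card]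
    refine ((Nat.dvd_prime hp.out).mp hexp).resolve_left fun h ↦ hP0 ?_
    have := AddMonoid.exp_eq_one_iff.mp h
    exact congrArg Subtype.val (Subsingleton.elim (⟨P, hP⟩ : K) 0)
  have : Finite K := Nat.finite_of_card_ne_zero (hcard ▸ hp.out.ne_zero)
  have hPK : AddSubgroup.zmultiples P = K :=
    AddSubgroup.eq_of_le_of_card_ge (AddSubgroup.zmultiples_le.mpr hP)
      (by rw [hcard, Nat.card_zmultiples, addOrderOf_eq_prime hP hP0])
  exact hQP (hPK ▸ hQ)

lemma eq_zero_or_eq_or_eq_neg_of_mem_zmultiples {P Q : G} (hP : 3 • P = 0)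
    (hQ : Q ∈ AddSubgroup.zmultiples P) : Q = 0 ∨ Q = P ∨ Q = -P := by
  obtain ⟨k, rfl⟩ := hQ
  have h2 : (2 : ℤ) • P = -P := by
    rw [eq_neg_iff_add_eq_zero, ← add_one_zsmul]; exact_mod_cast hP
  have h3 : (3 : ℤ) • P = 0 := by exact_mod_cast hP
  have hk : k • P = (k % 3) • P := by
    conv_lhs => rw [← Int.emod_add_mul_ediv k 3, add_zsmul, mul_comm, mul_zsmul, h3, smul_zero,
      add_zero]
  simp only [hk]
  rcases (by omega : k % 3 = 0 ∨ k % 3 = 1 ∨ k % 3 = 2) with h | h | h <;> simp [h, h2]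

end Cyclic

namespace WeierstrassCurve.Affine.Point

variable {F : Type*} [Field F] [DecidableEq F] {W : WeierstrassCurve.Affine F}

lemma three_smul_some_eq_zero {x y : F} (h : W.Nonsingular x y) (hy : y ≠ W.negY x y)
    (hψ : W.Ψ₃.eval x = 0) : 3 • some x y h = 0 := by
  have hX : W.addX x x (W.slope x x y y) = x := by
    have hd : y - W.negY x y ≠ 0 := sub_ne_zero.mpr hy
    -- on the curve, `(y - negY x y)² (addX - x) = -Ψ₃(x)`
    rw [slope_of_Y_ne rfl hy, addX]
    simp only [Ψ₃, b₂, b₄, b₆, b₈, eval_add, eval_mul, eval_pow, eval_C, eval_X, eval_ofNat] at hψ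
    have heq := (equation_iff x y).mp h.1
    field_simp
    rw [negY]
    linear_combination (-(W.a₁ ^ 2 + 4 * W.a₂ + 12 * x)) * heq - hψ
  have h2 : some x y h + some x y h = -some x y h := by
    have hR := add_self_of_Y_ne' (h₁ := h) hy
    rcases X_eq_iff.mp hX with h' | h'
    · rw [hR, h']
    · rw [h', neg_neg, add_eq_left] at hR
      exact absurd hR (some_ne_zero h)
  rw [succ_nsmul, two_nsmul, h2, neg_add_cancel]

lemma not_isAddCyclic_of_three_torsion {x₁ y₁ x₂ y₂ : F} {h₁ : W.Nonsingular x₁ y₁}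
    {h₂ : W.Nonsingular x₂ y₂} (hP : 3 • some x₁ y₁ h₁ = 0) (hQ : 3 • some x₂ y₂ h₂ = 0)
    (hx : x₁ ≠ x₂) : ¬IsAddCyclic W.Point := by
  refine not_isAddCyclic_of_nsmul_eq_zero (p := 3) hP (some_ne_zero h₁) hQ fun hmem ↦ ?_
  rcases eq_zero_or_eq_or_eq_neg_of_mem_zmultiples hP hmem with h | h | h
  · exact some_ne_zero h₂ h
  · exact hx (X_eq_iff.mpr (Or.inl h.symm))
  · exact hx (X_eq_iff.mpr (Or.inr (by rw [h, neg_neg])))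

end WeierstrassCurve.Affine.Point

lemma mem_range_algebraMap_of_pow_eq_self {F : Type*} [Field F] {p : ℕ} [Fact p.Prime]
    [Algebra (ZMod p) F] {x : F} (hx : x ^ p = x) : x ∈ Set.range (algebraMap (ZMod p) F) := by
  have : CharP F p := charP_of_injective_algebraMap (algebraMap (ZMod p) F).injective p
  have hbot := (Subfield.mem_bot_iff_pow_eq_self F p).mpr hx
  rw [← ZMod.fieldRange_castHom_eq_bot p] at hbot
  obtain ⟨c, hc⟩ := hbot
  exact ⟨c, by rwa [Subsingleton.elim (algebraMap (ZMod p) F) (ZMod.castHom dvd_rfl F)]⟩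

section CharFive

variable {F : Type*} [Field F] [CharP F 5]

lemma ringChar_ne_two : ringChar F ≠ 2 := by
  rw [ringChar.eq F 5]
  norm_num

/-- `y² = x³ + A x + 2A² + 3A + 4`: in characteristic 5 this is `y² = x³ + p(a) x + q(a)` for
`A = p(a)`. -/
def curveE (A : F) : WeierstrassCurve.Affine F := ⟨0, 0, 0, A, 2 * A ^ 2 + 3 * A + 4⟩

lemma curveE_Ψ₃_eval (A x : F) :
    (curveE A).Ψ₃.eval x = 3 * (x + 1) * (x ^ 3 - x ^ 2 + (2 * A + 1) * x - 2 * A ^ 2) := by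
  simp only [Ψ₃, b₂, b₄, b₆, b₈, curveE, eval_add, eval_mul, eval_pow, eval_C, eval_X, eval_ofNat]
  linear_combination (norm := ring_nf)
  reduce_mod_char!

lemma curveE_exists_three_torsion [DecidableEq F] {A x y : F} (hy : y ≠ 0)
    (heq : y ^ 2 = x ^ 3 + A * x + (2 * A ^ 2 + 3 * A + 4))
    (hψ : (x + 1) * (x ^ 3 - x ^ 2 + (2 * A + 1) * x - 2 * A ^ 2) = 0) :
    ∃ h : (curveE A).Nonsingular x y, 3 • Point.some x y h = 0 := by
  have h2y : y ≠ (curveE A).negY x y := by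
    intro h
    apply hy
    simp only [negY, curveE] at h
    linear_combination (norm := ring_nf) 3 * h
    reduce_mod_char!
  have h : (curveE A).Nonsingular x y := by
    refine (nonsingular_iff x y).mpr ⟨(equation_iff x y).mpr ?_, .inr h2y⟩
    simp only [curveE]
    linear_combination heq
  exact ⟨h, Point.three_smul_some_eq_zero h h2y (by rw [curveE_Ψ₃_eval, mul_assoc, hψ, mul_zero])⟩

lemma curveE_exists_point_cubic_root {A : F}
    (hA : (A ^ 3 - A) * (A ^ 2 - A + 1) * (A ^ 2 - A + 2) = 0) :
    ∃ x y : F, y ≠ 0 ∧ y ^ 2 = x ^ 3 + A * x + (2 * A ^ 2 + 3 * A + 4) ∧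
      x ^ 3 - x ^ 2 + (2 * A + 1) * x - 2 * A ^ 2 = 0 := by
  rcases mul_eq_zero.mp hA with hA | hA
  · rcases mul_eq_zero.mp hA with hA | hA
    · refine ⟨3 * A, 2, Ring.two_ne_zero ringChar_ne_two, ?_, ?_⟩
      · linear_combination (norm := ring_nf) 3 * hA
        reduce_mod_char!
      · linear_combination (norm := ring_nf) 2 * hA
        reduce_mod_char!
    · refine ⟨3 * A + 2, 1, one_ne_zero, ?_, ?_⟩
      · linear_combination (norm := ring_nf) (4 + 3 * A) * hA
        reduce_mod_char!
      · linear_combination (norm := ring_nf) (1 + 2 * A) * hA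
        reduce_mod_char!
  · refine ⟨4 - A, 4 - A, fun h ↦ one_ne_zero (α := F) ?_, ?_, ?_⟩
    · linear_combination (norm := ring_nf) 4 * hA + 4 * (A + 3) * h
      reduce_mod_char!
    · linear_combination (norm := ring_nf) (4 + A) * hA
      reduce_mod_char!
    · linear_combination (norm := ring_nf) (1 + 4 * A) * hA
      reduce_mod_char!

lemma curveE_not_isAddCyclic [DecidableEq F] {A : F} (h2 : IsSquare (2 : F)) (hA2 : A ≠ 2)
    (hA : (A - 2) * ((A ^ 3 - A) * (A ^ 2 - A + 1) * (A ^ 2 - A + 2)) = 0) :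
    ¬IsAddCyclic (curveE A).Point := by
  obtain ⟨ι, hι⟩ := h2
  have hy₁ : ι * (A + 3) ≠ 0 := by
    refine mul_ne_zero (fun h ↦ Ring.two_ne_zero ringChar_ne_two (by rw [hι, h, mul_zero]))
      fun h ↦ hA2 ?_
    linear_combination (norm := ring_nf) h
    reduce_mod_char!
  have heq₁ : (ι * (A + 3)) ^ 2 = (-1) ^ 3 + A * (-1) + (2 * A ^ 2 + 3 * A + 4) := by
    linear_combination (norm := ring_nf) (A + 3) ^ 2 * hι.symm
    reduce_mod_char!
  obtain ⟨h₁, hP⟩ := curveE_exists_three_torsion hy₁ heq₁ (by ring)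
  obtain ⟨x, y, hy, heq, hcubic⟩ :=
    curveE_exists_point_cubic_root ((mul_eq_zero.mp hA).resolve_left (sub_ne_zero.mpr hA2))
  obtain ⟨h₂, hQ⟩ := curveE_exists_three_torsion hy heq (by rw [hcubic, mul_zero])
  refine Point.not_isAddCyclic_of_three_torsion hP hQ fun hx ↦ hA2 ?_
  rw [← hx] at hcubic
  have : (A - 2) ^ 2 = 0 := by
    linear_combination (norm := ring_nf) (-3) * hcubic
    reduce_mod_char!
  exact sub_eq_zero.mp (pow_eq_zero_iff two_ne_zero |>.mp this)

lemma isSquare_two_of_card_eq [Fintype F] (hF : Fintype.card F = 25) : IsSquare (2 : F) := by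
  rw [FiniteField.isSquare_iff ringChar_ne_two (Ring.two_ne_zero ringChar_ne_two), hF]
  norm_num
  reduce_mod_char!

lemma prod_eq_zero_of_pow_twentyFive {a A : F} (hA : A = a ^ 3 - a ^ 2 + 2 * a)
    (h25 : a ^ 25 = a) (h5 : a ^ 5 ≠ a) :
    (A - 2) * ((A ^ 3 - A) * (A ^ 2 - A + 1) * (A ^ 2 - A + 2)) = 0 := by
  subst hA
  -- over `𝔽₅`: `R(p(X)) (X⁵ - X) = (X⁴ + 2X³ + 4X² + 3X) (X²⁵ - X)`, `R` the product above
  refine (mul_eq_zero.mp ?_).resolve_right (sub_ne_zero.mpr h5)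
  linear_combination (norm := ring_nf) (a ^ 4 + 2 * a ^ 3 + 4 * a ^ 2 + 3 * a) * h25
  reduce_mod_char!

lemma not_isAddCyclic_of_pow_twentyFive [DecidableEq F] {a : F} (h2 : IsSquare (2 : F))
    (h25 : a ^ 25 = a) (h5 : a ^ 5 ≠ a)
    (hΔ : (-16 : F) *
        (4 * (a ^ 3 - a ^ 2 + 2 * a) ^ 3 + 27 * (2 * a ^ 6 + a ^ 5 + a - 1) ^ 2) ≠ 0)
    {W : WeierstrassCurve.Affine F}
    (hW : W = ⟨0, 0, 0, a ^ 3 - a ^ 2 + 2 * a, 2 * a ^ 6 + a ^ 5 + a - 1⟩) :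
    ¬IsAddCyclic W.Point := by
  set A := a ^ 3 - a ^ 2 + 2 * a with hA
  have hq : 2 * a ^ 6 + a ^ 5 + a - 1 = 2 * A ^ 2 + 3 * A + 4 := by
    rw [hA]
    linear_combination (norm := ring_nf)
    reduce_mod_char!
  have hA2 : A ≠ 2 := by
    intro h
    apply hΔ
    rw [hq, h]
    norm_num
    reduce_mod_char!
  rw [hq] at hW
  subst hW
  exact curveE_not_isAddCyclic h2 hA2 (prod_eq_zero_of_pow_twentyFive hA h25 h5)

end CharFive

open Classical in
/-- Let `p(X) = X³ - X² + 2X` and `q(X) = 2X⁶ + X⁵ + X - 1` over `𝔽₅`. For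
every `a ∈ 𝔽₂₅` not in the prime subfield `𝔽₅` with `-16(4p(a)³ + 27q(a)²) ≠ 0`, the group of
`𝔽₂₅`-points of the elliptic curve `y² = x³ + p(a)x + q(a)` is not cyclic. -/
theorem stmt_19 (a : GaloisField 5 2)
    (ha : a ∉ Set.range (algebraMap (ZMod 5) (GaloisField 5 2)))
    (hΔ : (-16 : GaloisField 5 2) *
        (4 * (a ^ 3 - a ^ 2 + 2 * a) ^ 3 + 27 * (2 * a ^ 6 + a ^ 5 + a - 1) ^ 2) ≠ 0)
    (W : WeierstrassCurve.Affine (GaloisField 5 2))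
    (hW : W = ⟨0, 0, 0, a ^ 3 - a ^ 2 + 2 * a, 2 * a ^ 6 + a ^ 5 + a - 1⟩) :
    ¬ IsAddCyclic W.Point := by
  have : Fintype (GaloisField 5 2) := Fintype.ofFinite _
  have hcard : Fintype.card (GaloisField 5 2) = 25 := by
    rw [← Nat.card_eq_fintype_card, GaloisField.card 5 2 two_ne_zero]
    norm_num
  exact not_isAddCyclic_of_pow_twentyFive (isSquare_two_of_card_eq hcard)
    (hcard ▸ FiniteField.pow_card a) (fun h ↦ ha (mem_range_algebraMap_of_pow_eq_self h)) hΔ hW
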